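/- Last-row decomposition: for every φ ∈ Fpl(n,+) there is a unique index i ∈ {1,…,n} such that the bottom-row vertex (i,1) has type c; moreover, for this i, every bottom-row vertex (k,1) with k < i has type b and every bottom-row vertex (k,1) with k > i has type a. -/
import Mathlib


open scoped Classical

/-! ### Link patterns

A link pattern on `2n` cyclically ordered points is a fixed-point-free noncrossing
involution.  The point `i : ZMod (2*n)` represents the label `lbl (2*n) i ∈ {1,…,2n}`
(so label arithmetic is arithmetic in `ZMod (2*n)`). -/

instance instNeZeroTwoMul (n : ℕ) [NeZero n] : NeZero (2 * n) :=
  ⟨by have := NeZero.ne n; omega⟩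

/-- The label in `{1,…,M}` represented by a point of `ZMod M`. -/
def lbl (M : ℕ) (i : ZMod M) : ℕ := if i.val = 0 then M else i.val

/-- A fixed-point-free involution of the `2n` points on a circle which is noncrossing. -/
def IsLinkPattern (n : ℕ) (f : ZMod (2 * n) → ZMod (2 * n)) : Prop :=
  Function.Involutive f ∧ (∀ i, f i ≠ i) ∧
    ∀ i j : ZMod (2 * n), ¬ (i.val < j.val ∧ j.val < (f i).val ∧ (f i).val < (f j).val)

/-- The set `LP(n)` of link patterns on `2n` points, as a subtype. -/
abbrev LinkPattern (n : ℕ) := {f : ZMod (2 * n) → ZMod (2 * n) // IsLinkPattern n f}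

/-- Rotation `R`: `R π` pairs `i-1` with `j-1` whenever `π` pairs `i` with `j`. -/
def rotMap (M : ℕ) (f : ZMod M → ZMod M) : ZMod M → ZMod M := fun i => f (i + 1) - 1

/-- Inverse rotation `R⁻¹`. -/
def rotInvMap (M : ℕ) (f : ZMod M → ZMod M) : ZMod M → ZMod M := fun i => f (i - 1) + 1

/-- The Temperley–Lieb map `e_j` (here `j : ZMod M` represents the label `lbl M j`):
if `π` pairs `j` with `j+1` it does nothing, otherwise it re-pairs `j` with `j+1`
and `π(j)` with `π(j+1)`. -/
def eMap (M : ℕ) (j : ZMod M) (f : ZMod M → ZMod M) : ZMod M → ZMod M := fun i =>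
  if f j = j + 1 then f i
  else if i = j then j + 1
  else if i = j + 1 then j
  else if i = f j then f (j + 1)
  else if i = f (j + 1) then f j
  else f i

/-! ### The `n × n` FPL domain

Vertices are `(x,y)` with `1 ≤ x,y ≤ n`.  `SqEdge.h x y` is the horizontal edge joining
`(x,y)` and `(x+1,y)` (valid for `0 ≤ x ≤ n`, `1 ≤ y ≤ n`; `x = 0` and `x = n` give the
west/east external edges); `SqEdge.v x y` is the vertical edge joining `(x,y)` and
`(x,y+1)` (valid for `1 ≤ x ≤ n`, `0 ≤ y ≤ n`; `y = 0` and `y = n` give the south/north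
external edges).  A configuration is a map `SqEdge → Bool` (`true` = black). -/

inductive SqEdge : Type
  | h : ℕ → ℕ → SqEdge
  | v : ℕ → ℕ → SqEdge
deriving DecidableEq

/-- Validity of an edge for the `n × n` domain. -/
def validB (n : ℕ) : SqEdge → Bool
  | .h x y => decide (x ≤ n) && decide (1 ≤ y) && decide (y ≤ n)
  | .v x y => decide (1 ≤ x) && decide (x ≤ n) && decide (y ≤ n)

/-- The external edge with counterclockwise label `k ∈ {1,…,4n}`, starting from the
bottom external edge of the corner vertex `(1,1)`. -/
def extEdge (n k : ℕ) : SqEdge :=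
  if k ≤ n then .v k 0
  else if k ≤ 2 * n then .h n (k - n)
  else if k ≤ 3 * n then .v (3 * n + 1 - k) n
  else .h 0 (4 * n + 1 - k)

def IsExternal (n : ℕ) (e : SqEdge) : Prop := ∃ k, 1 ≤ k ∧ k ≤ 4 * n ∧ e = extEdge n k

/-- The west, east, south, north edges incident to the vertex `(x,y)`. -/
def wEdge (x y : ℕ) : SqEdge := .h (x - 1) y
def eEdge (x y : ℕ) : SqEdge := .h x y
def sEdge (x y : ℕ) : SqEdge := .v x (y - 1)
def nEdge (x y : ℕ) : SqEdge := .v x y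

def IncidentAt (e : SqEdge) (x y : ℕ) : Prop :=
  e = wEdge x y ∨ e = eEdge x y ∨ e = sEdge x y ∨ e = nEdge x y

def blackDeg (φ : SqEdge → Bool) (x y : ℕ) : ℕ :=
  (if φ (wEdge x y) then 1 else 0) + (if φ (eEdge x y) then 1 else 0) +
    (if φ (sEdge x y) then 1 else 0) + (if φ (nEdge x y) then 1 else 0)

/-- A fully-packed loop configuration on the `n × n` domain: it is supported on the
valid edges, and every vertex is incident to exactly two black (and two white) edges. -/
def IsFpl (n : ℕ) (φ : SqEdge → Bool) : Prop :=
  (∀ e, φ e = true → validB n e = true) ∧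
    ∀ x y, 1 ≤ x → x ≤ n → 1 ≤ y → y ≤ n → blackDeg φ x y = 2

/-- Alternating boundary colouring `τ₊` (external label `1` black). -/
def BPlus (n : ℕ) (φ : SqEdge → Bool) : Prop :=
  ∀ k, 1 ≤ k → k ≤ 4 * n → (φ (extEdge n k) = true ↔ k % 2 = 1)

/-- Complementary alternating boundary colouring `τ₋`. -/
def BMinus (n : ℕ) (φ : SqEdge → Bool) : Prop :=
  ∀ k, 1 ≤ k → k ≤ 4 * n → (φ (extEdge n k) = true ↔ k % 2 = 0)

/-- Two (valid) edges of colour `b` sharing an internal vertex. -/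
def adjC (n : ℕ) (b : Bool) (φ : SqEdge → Bool) (e e' : SqEdge) : Prop :=
  e ≠ e' ∧ validB n e = true ∧ validB n e' = true ∧ φ e = b ∧ φ e' = b ∧
    ∃ x y, 1 ≤ x ∧ x ≤ n ∧ 1 ≤ y ∧ y ≤ n ∧ IncidentAt e x y ∧ IncidentAt e' x y

/-- Connectivity through monochromatic paths of colour `b`. -/
def Conn (n : ℕ) (b : Bool) (φ : SqEdge → Bool) : SqEdge → SqEdge → Prop :=
  Relation.ReflTransGen (adjC n b φ)

/-- In `Fpl(n,+)` the black external edge with black label `t ∈ {1,…,2n}` has overall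
label `2t-1`.  `φ` has link pattern (matching) `g` iff for every point `i` the black
external edges with black labels `lbl i` and `lbl (g i)` are joined by a black path. -/
def RealizesP (n : ℕ) (φ : SqEdge → Bool) (g : ZMod (2 * n) → ZMod (2 * n)) : Prop :=
  ∀ i, Conn n true φ (extEdge n (2 * lbl (2 * n) i - 1)) (extEdge n (2 * lbl (2 * n) (g i) - 1))

/-- In `Fpl(n,-)` the black external edge with black label `t` has overall label `2t`
(black labelling starting from the bottom external edge of the vertex `(2,1)`). -/
def RealizesM (n : ℕ) (φ : SqEdge → Bool) (g : ZMod (2 * n) → ZMod (2 * n)) : Prop :=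
  ∀ i, Conn n true φ (extEdge n (2 * lbl (2 * n) i)) (extEdge n (2 * lbl (2 * n) (g i)))

/-- `Ψ_{n,+}(g)`: the number of FPLs in `Fpl(n,+)` with link pattern `g`. -/
noncomputable def PsiP (n : ℕ) (g : ZMod (2 * n) → ZMod (2 * n)) : ℕ :=
  Set.ncard {φ : SqEdge → Bool | IsFpl n φ ∧ BPlus n φ ∧ RealizesP n φ g}

/-- `Ψ_{n,-}(g)`: the number of FPLs in `Fpl(n,-)` with link pattern `g`. -/
noncomputable def PsiM (n : ℕ) (g : ZMod (2 * n) → ZMod (2 * n)) : ℕ :=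
  Set.ncard {φ : SqEdge → Bool | IsFpl n φ ∧ BMinus n φ ∧ RealizesM n φ g}

/-! ### Vertex types

At a vertex, type `a`: the black edges are `{S,W}` or `{N,E}`; type `b`: `{S,E}` or
`{N,W}`; type `c`: `{N,S}` or `{E,W}`. -/

def typeA (φ : SqEdge → Bool) (x y : ℕ) : Prop :=
  (φ (sEdge x y) = true ∧ φ (wEdge x y) = true ∧ φ (nEdge x y) = false ∧ φ (eEdge x y) = false) ∨
  (φ (nEdge x y) = true ∧ φ (eEdge x y) = true ∧ φ (sEdge x y) = false ∧ φ (wEdge x y) = false)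

def typeB (φ : SqEdge → Bool) (x y : ℕ) : Prop :=
  (φ (sEdge x y) = true ∧ φ (eEdge x y) = true ∧ φ (nEdge x y) = false ∧ φ (wEdge x y) = false) ∨
  (φ (nEdge x y) = true ∧ φ (wEdge x y) = true ∧ φ (sEdge x y) = false ∧ φ (eEdge x y) = false)

def typeC (φ : SqEdge → Bool) (x y : ℕ) : Prop :=
  (φ (nEdge x y) = true ∧ φ (sEdge x y) = true ∧ φ (eEdge x y) = false ∧ φ (wEdge x y) = false) ∨
  (φ (eEdge x y) = true ∧ φ (wEdge x y) = true ∧ φ (nEdge x y) = false ∧ φ (sEdge x y) = false)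

/-- FPLs in `Fpl(n,+)` whose bottom-row vertex `(2j-1,1)` has type `a`, `b`, `c`. -/
def FplA_odd (n j : ℕ) : Set (SqEdge → Bool) :=
  {φ | IsFpl n φ ∧ BPlus n φ ∧ typeA φ (2 * j - 1) 1}
def FplB_odd (n j : ℕ) : Set (SqEdge → Bool) :=
  {φ | IsFpl n φ ∧ BPlus n φ ∧ typeB φ (2 * j - 1) 1}
def FplC_odd (n j : ℕ) : Set (SqEdge → Bool) :=
  {φ | IsFpl n φ ∧ BPlus n φ ∧ typeC φ (2 * j - 1) 1}

/-- FPLs in `Fpl(n,+)` whose bottom-row vertex `(2j,1)` has type `a`, `b`, `c`. -/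
def FplA_even (n j : ℕ) : Set (SqEdge → Bool) :=
  {φ | IsFpl n φ ∧ BPlus n φ ∧ typeA φ (2 * j) 1}
def FplB_even (n j : ℕ) : Set (SqEdge → Bool) :=
  {φ | IsFpl n φ ∧ BPlus n φ ∧ typeB φ (2 * j) 1}
def FplC_even (n j : ℕ) : Set (SqEdge → Bool) :=
  {φ | IsFpl n φ ∧ BPlus n φ ∧ typeC φ (2 * j) 1}


/-- Auxiliary boolean `d_j` along the bottom row. -/
def Dfun (φ : SqEdge → Bool) (j : ℕ) : Bool := xor (φ (.h j 1)) (decide (j % 2 = 1))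

lemma extEdge_low (n k : ℕ) (h2 : k ≤ n) : extEdge n k = .v k 0 := by
  simp [extEdge, h2]

lemma sEdge_val (n : ℕ) (φ : SqEdge → Bool) (hB : BPlus n φ) (k : ℕ) (h1 : 1 ≤ k)
    (h2 : k ≤ n) : φ (SqEdge.v k 0) = decide (k % 2 = 1) := by
  have h := hB k h1 (by omega)
  rw [extEdge_low n k h2] at h
  by_cases hk : k % 2 = 1 <;> simp [hk] at h ⊢ <;> exact h

lemma classify (n : ℕ) (φ : SqEdge → Bool) (hF : IsFpl n φ) (hB : BPlus n φ)
    (k : ℕ) (h1 : 1 ≤ k) (h2 : k ≤ n) :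
    (typeB φ k 1 ∧ Dfun φ (k-1) = false ∧ Dfun φ k = false) ∨
    (typeC φ k 1 ∧ Dfun φ (k-1) = false ∧ Dfun φ k = true) ∨
    (typeA φ k 1 ∧ Dfun φ (k-1) = true ∧ Dfun φ k = true) := by
  have hs : φ (SqEdge.v k 0) = decide (k % 2 = 1) := sEdge_val n φ hB k h1 h2
  have hdeg : blackDeg φ k 1 = 2 := hF.2 k 1 h1 h2 le_rfl (le_trans h1 h2)
  unfold blackDeg wEdge eEdge sEdge nEdge at hdeg
  unfold typeA typeB typeC Dfun wEdge eEdge sEdge nEdge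
  rcases Nat.mod_two_eq_zero_or_one k with hk | hk
  · have hk1 : (k-1) % 2 = 1 := by omega
    cases hw : φ (.h (k-1) 1) <;> cases he : φ (.h k 1) <;> cases hnn : φ (.v k 1) <;>
      simp_all [hk, hk1]
  · have hk1 : (k-1) % 2 = 0 := by omega
    cases hw : φ (.h (k-1) 1) <;> cases he : φ (.h k 1) <;> cases hnn : φ (.v k 1) <;>
      simp_all [hk, hk1]

lemma typeC_not_B (φ : SqEdge → Bool) (x y : ℕ) : typeC φ x y → ¬ typeB φ x y := by
  rintro (⟨h1,h2,h3,h4⟩|⟨h1,h2,h3,h4⟩) (⟨g1,g2,g3,g4⟩|⟨g1,g2,g3,g4⟩) <;> simp_all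

lemma typeC_not_A (φ : SqEdge → Bool) (x y : ℕ) : typeC φ x y → ¬ typeA φ x y := by
  rintro (⟨h1,h2,h3,h4⟩|⟨h1,h2,h3,h4⟩) (⟨g1,g2,g3,g4⟩|⟨g1,g2,g3,g4⟩) <;> simp_all

lemma typeC_D (n : ℕ) (φ : SqEdge → Bool) (hF : IsFpl n φ) (hB : BPlus n φ)
    (k : ℕ) (h1 : 1 ≤ k) (h2 : k ≤ n) (hc : typeC φ k 1) :
    Dfun φ (k-1) = false ∧ Dfun φ k = true := by
  rcases classify n φ hF hB k h1 h2 with ⟨h,_,_⟩|⟨_,ha,hb⟩|⟨h,_,_⟩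
  · exact absurd h (typeC_not_B φ k 1 hc)
  · exact ⟨ha, hb⟩
  · exact absurd h (typeC_not_A φ k 1 hc)

lemma Dmono (n : ℕ) (φ : SqEdge → Bool) (hF : IsFpl n φ) (hB : BPlus n φ) :
    ∀ b, b ≤ n → ∀ a, a ≤ b → Dfun φ a = true → Dfun φ b = true := by
  intro b
  induction b with
  | zero => intro _ a ha hd; obtain rfl : a = 0 := Nat.le_zero.mp ha; exact hd
  | succ m ih =>
    intro hb a ha hd
    by_cases h : a = m + 1
    · subst h; exact hd
    · have hDm : Dfun φ m = true := ih (by omega) a (by omega) hd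
      rcases classify n φ hF hB (m+1) (by omega) hb with ⟨_,h1,_⟩|⟨_,h1,_⟩|⟨_,_,h2⟩
      · simp [Nat.add_sub_cancel] at h1; simp_all
      · simp [Nat.add_sub_cancel] at h1; simp_all
      · exact h2

lemma D_zero (n : ℕ) (hn : 1 ≤ n) (φ : SqEdge → Bool) (hB : BPlus n φ) :
    Dfun φ 0 = false := by
  have h := hB (4*n) (by omega) le_rfl
  have he : extEdge n (4*n) = .h 0 1 := by
    unfold extEdge
    rw [if_neg (by omega), if_neg (by omega), if_neg (by omega)]
    congr 1; omega
  rw [he] at h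
  have h4 : ¬ (4*n % 2 = 1) := by omega
  simp [Dfun, h4] at h ⊢
  exact h

lemma D_n (n : ℕ) (hn : 1 ≤ n) (φ : SqEdge → Bool) (hB : BPlus n φ) :
    Dfun φ n = true := by
  have h := hB (n+1) (by omega) (by omega)
  have he : extEdge n (n+1) = .h n 1 := by
    unfold extEdge
    rw [if_neg (by omega), if_pos (by omega)]
    congr 1; omega
  rw [he] at h
  rcases Nat.mod_two_eq_zero_or_one n with hk | hk
  · have : (n+1) % 2 = 1 := by omega
    simp [Dfun, hk, h.mpr this]
  · have h2 : ¬ ((n+1) % 2 = 1) := by omega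
    have : φ (.h n 1) = false := by
      cases hv : φ (.h n 1)
      · rfl
      · exact absurd (h.mp hv) h2
    simp [Dfun, hk, this]

lemma D_crossing (φ : SqEdge → Bool) (hD0 : Dfun φ 0 = false) :
    ∀ m, Dfun φ m = true → ∃ i, 1 ≤ i ∧ i ≤ m ∧ Dfun φ (i-1) = false ∧ Dfun φ i = true := by
  intro m
  induction m with
  | zero => intro h; simp_all
  | succ m ih =>
    intro h
    by_cases hm : Dfun φ m = true
    · obtain ⟨i, hi1, hi2, hi3, hi4⟩ := ih hm
      exact ⟨i, hi1, by omega, hi3, hi4⟩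
    · exact ⟨m+1, by omega, le_rfl, by
        simp [Nat.add_sub_cancel]; exact Bool.eq_false_iff.mpr hm, h⟩

/-- **Last-row decomposition.**  Every `φ ∈ Fpl(n,+)` has a unique bottom-row vertex
`(i,1)` of type `c`; all bottom-row vertices to its left have type `b` and all those
to its right have type `a`. -/
theorem last_row_decomposition (n : ℕ) (hn : 1 ≤ n) (φ : SqEdge → Bool)
    (hφ : IsFpl n φ ∧ BPlus n φ) :
    (∃! i, (1 ≤ i ∧ i ≤ n) ∧ typeC φ i 1) ∧
    ∀ i, 1 ≤ i → i ≤ n → typeC φ i 1 →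
      (∀ k, 1 ≤ k → k < i → typeB φ k 1) ∧ ∀ k, i < k → k ≤ n → typeA φ k 1 := by
  obtain ⟨hF, hB⟩ := hφ
  have hD0 := D_zero n hn φ hB
  have hDn := D_n n hn φ hB
  -- uniqueness helper
  have uniq : ∀ i j, 1 ≤ i → i ≤ n → typeC φ i 1 → 1 ≤ j → j ≤ n → typeC φ j 1 → i = j := by
    intro i j hi1 hi2 hci hj1 hj2 hcj
    obtain ⟨hiD1, hiD2⟩ := typeC_D n φ hF hB i hi1 hi2 hci
    obtain ⟨hjD1, hjD2⟩ := typeC_D n φ hF hB j hj1 hj2 hcj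
    by_contra hne
    rcases Nat.lt_or_ge i j with h | h
    · have := Dmono n φ hF hB (j-1) (by omega) i (by omega) hiD2
      simp_all
    · have hlt : j < i := by omega
      have := Dmono n φ hF hB (i-1) (by omega) j (by omega) hjD2
      simp_all
  constructor
  · obtain ⟨i, hi1, hi2, hi3, hi4⟩ := D_crossing φ hD0 n hDn
    have hci : typeC φ i 1 := by
      rcases classify n φ hF hB i hi1 hi2 with ⟨_,_,h⟩|⟨h,_,_⟩|⟨_,h,_⟩
      · simp_all
      · exact h
      · simp_all
    exact ⟨i, ⟨⟨hi1, hi2⟩, hci⟩, fun j ⟨⟨hj1, hj2⟩, hcj⟩ => (uniq i j hi1 hi2 hci hj1 hj2 hcj).symm⟩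
  · intro i hi1 hi2 hci
    obtain ⟨hiD1, hiD2⟩ := typeC_D n φ hF hB i hi1 hi2 hci
    constructor
    · intro k hk1 hk2
      rcases classify n φ hF hB k hk1 (by omega) with ⟨h,_,_⟩|⟨_,_,h⟩|⟨_,_,h⟩
      · exact h
      · have := Dmono n φ hF hB (i-1) (by omega) k (by omega) h
        simp_all
      · have := Dmono n φ hF hB (i-1) (by omega) k (by omega) h
        simp_all
    · intro k hk1 hk2
      rcases classify n φ hF hB k (by omega) hk2 with ⟨_,h,_⟩|⟨_,h,_⟩|⟨h,_,_⟩
      · have := Dmono n φ hF hB (k-1) (by omega) i (by omega) hiD2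
        simp_all
      · have := Dmono n φ hF hB (k-1) (by omega) i (by omega) hiD2
        simp_all
      · exact h
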